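/- A skew brace A is L-nilpotent (L^{k+1}(A) = 1 for some k) if and only if A is left nilpotent (the chain A¹ = A, A^{i+1} = ⟨a*b : a ∈ A, b ∈ A^i⟩ reaches 1) and the group (A,·) is nilpotent. -/

import Mathlib

/-!
Both `A^{p}` (indexed from `A^{0} = A`) and the lower central series of `(A,·)` sit inside the
`L`-series, which gives one direction. For the other, give weight `p + 1` to the elements of
`A^{p}` and weight `r + 1 + j` to `⁅u, x⁆` with `u ∈ A^{r}` and `x` of weight `j`, and let `D_k`
be generated by the elements of weight at least `k`. The `D_k` are normal,
`⁅A^{r}, D_j⁆ ≤ D_{r+1+j}`, and `a * D_k ⊆ D_{k+1}`: since `λ_a` is an automorphism of `(A,·)`,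
`λ_a ⁅u, x⁆ = ⁅(a * u) u, (a * x) x⁆`, and by the weight bounds, modulo `D_{r+j+2}`, `a * u`
commutes with `x`, `a * x`, `⁅u, x⁆`, and `a * x` with `u`, `⁅u, x⁆`, which leaves `⁅u, x⁆`.
Hence `L^{k} ≤ D_{k+1}`. If `A^{m} = 1` and `γ_n = 1`, a nontrivial element of weight `j` is a
commutator of length `ℓ + 1 ≤ n` with entries from `A^{p}`, `p < m`, so `j ≤ n m`; thus
`L^{n m} ≤ D_{n m + 1} = 1`.
-/

/-- A skew brace structure on a group `(A,·)`: a second group operation `∘`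
(with identity `e` and inverse `cinv`) satisfying
`a ∘ (b · c) = (a ∘ b) · a⁻¹ · (a ∘ c)`. -/
structure SkewBrace (A : Type*) [Group A] where
  circ : A → A → A
  e : A
  cinv : A → A
  circ_assoc : ∀ a b c, circ (circ a b) c = circ a (circ b c)
  e_circ : ∀ a, circ e a = a
  circ_e : ∀ a, circ a e = a
  cinv_circ : ∀ a, circ (cinv a) a = e
  circ_cinv : ∀ a, circ a (cinv a) = e
  compat : ∀ a b c, circ a (b * c) = circ a b * a⁻¹ * circ a c

/-- The λ-map of a skew brace: `λ_a(b) = a⁻¹ · (a ∘ b)`. -/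
def SkewBrace.lam {A : Type*} [Group A] (B : SkewBrace A) (a b : A) : A :=
  a⁻¹ * B.circ a b

open Subgroup
open scoped commutatorElement

theorem seq_eq_of_succ {α : Type*} (F : α → α) {s t : ℕ → α} (h₀ : s 0 = t 0)
    (hs : ∀ i, s (i + 1) = F (s i)) (ht : ∀ i, t (i + 1) = F (t i)) : s = t := by
  funext i
  induction i with
  | zero => exact h₀
  | succ i ih => rw [hs, ht, ih]

theorem MonoidHom.mul_inv_mem_of_mem_closure {G : Type*} [Group G] {N : Subgroup G} [N.Normal]
    (φ : G →* G) {S : Set G} (hS : ∀ x ∈ S, φ x * x⁻¹ ∈ N) {x : G} (hx : x ∈ closure S) :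
    φ x * x⁻¹ ∈ N := by
  have key : ∀ y, φ y * y⁻¹ ∈ N ↔ (QuotientGroup.mk' N).comp φ y = QuotientGroup.mk' N y :=
    fun y => by simp [QuotientGroup.eq_iff_div_mem, div_eq_mul_inv]
  exact (key x).2 (MonoidHom.eqOn_closure (fun y hy => (key y).1 (hS y hy)) hx)

theorem commutatorElement_mul_mul_of_commute {G : Type*} [Group G] {u u' v v' : G}
    (h₁ : Commute u' v) (h₂ : Commute u' v') (h₃ : Commute u' ⁅u, v⁆) (h₄ : Commute u v')
    (h₅ : Commute v' ⁅u, v⁆) : ⁅u' * u, v' * v⁆ = ⁅u, v⁆ := by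
  have hconj : u * (v' * v) * u⁻¹ = v' * ⁅u, v⁆ * v := by
    rw [commutatorElement_def, ← mul_assoc, h₄.eq]; group
  calc ⁅u' * u, v' * v⁆ = u' * (v' * ⁅u, v⁆ * v) * u'⁻¹ * (v' * v)⁻¹ := by
        rw [← hconj, commutatorElement_def]; group
    _ = v' * ⁅u, v⁆ * v'⁻¹ := by
        rw [((h₂.mul_right h₃).mul_right h₁).eq]; group
    _ = ⁅u, v⁆ := by rw [h₅.eq]; group

theorem Subgroup.commutatorElement_mul_mul_mul_inv_mem {G : Type*} [Group G] {N : Subgroup G}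
    [N.Normal] {u u' v v' : G} (h₁ : ⁅u', v⁆ ∈ N) (h₂ : ⁅u', v'⁆ ∈ N) (h₃ : ⁅u', ⁅u, v⁆⁆ ∈ N)
    (h₄ : ⁅u, v'⁆ ∈ N) (h₅ : ⁅v', ⁅u, v⁆⁆ ∈ N) : ⁅u' * u, v' * v⁆ * ⁅u, v⁆⁻¹ ∈ N := by
  have hmk : ∀ {a b : G}, ⁅a, b⁆ ∈ N → Commute (QuotientGroup.mk' N a) (QuotientGroup.mk' N b) :=
    fun h => by
      rwa [← commutatorElement_eq_one_iff_commute, ← map_commutatorElement, ← MonoidHom.mem_ker,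
        QuotientGroup.ker_mk']
  have h₃' := hmk h₃
  have h₅' := hmk h₅
  rw [map_commutatorElement] at h₃' h₅'
  rw [← div_eq_mul_inv, ← QuotientGroup.eq_iff_div_mem, ← QuotientGroup.mk'_apply,
    ← QuotientGroup.mk'_apply, map_commutatorElement, map_commutatorElement, map_mul, map_mul]
  exact commutatorElement_mul_mul_of_commute (hmk h₁) (hmk h₂) h₃' (hmk h₄) h₅'

theorem Subgroup.closure_setOf_commutatorElement_eq {G : Type*} [Group G] (H : Subgroup G) :
    closure {x | ∃ a b : G, b ∈ H ∧ x = a * b * a⁻¹ * b⁻¹} = ⁅(⊤ : Subgroup G), H⁆ := by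
  rw [commutator_def]
  congr 1
  ext x
  simp [commutatorElement_def, eq_comm]

namespace SkewBrace

variable {A : Type*} [Group A] (B : SkewBrace A)

theorem circ_one (a : A) : B.circ a 1 = a := by
  have h := B.compat a 1 1
  rw [mul_one, mul_assoc, left_eq_mul, inv_mul_eq_one] at h
  exact h.symm

def lamHom (a : A) : A →* A where
  toFun := B.lam a
  map_one' := by simp [lam, circ_one]
  map_mul' x y := by simp only [lam, B.compat]; group

def star (a b : A) : A := B.lam a b * b⁻¹

theorem star_one (a : A) : B.star a 1 = 1 := by
  simp [star, lam, circ_one]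

def starClosure (H : Subgroup A) : Subgroup A :=
  closure {x | ∃ a b : A, b ∈ H ∧ x = a⁻¹ * B.circ a b * b⁻¹}

def leftSeries : ℕ → Subgroup A
  | 0 => ⊤
  | i + 1 => B.starClosure (leftSeries i)

def lSeries : ℕ → Subgroup A
  | 0 => ⊤
  | i + 1 => B.starClosure (lSeries i) ⊔ ⁅(⊤ : Subgroup A), lSeries i⁆

theorem closure_star_or_commutator_eq (H : Subgroup A) :
    closure {x | ∃ a b : A, b ∈ H ∧ (x = a⁻¹ * B.circ a b * b⁻¹ ∨ x = a * b * a⁻¹ * b⁻¹)} =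
      B.starClosure H ⊔ ⁅(⊤ : Subgroup A), H⁆ := by
  rw [← closure_setOf_commutatorElement_eq, starClosure, ← Subgroup.closure_union]
  congr 1
  ext x
  simp only [Set.mem_union, Set.mem_ofPred_eq, and_or_left, exists_or]

theorem mem_leftSeries_zero (a : A) : a ∈ B.leftSeries 0 := mem_top a

theorem star_mem_starClosure {H : Subgroup A} (a : A) {b : A} (hb : b ∈ H) :
    B.star a b ∈ B.starClosure H :=
  subset_closure ⟨a, b, hb, rfl⟩

theorem starClosure_bot : B.starClosure ⊥ = ⊥ := by
  rw [starClosure, closure_eq_bot_iff]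
  rintro _ ⟨a, b, hb, rfl⟩
  rw [mem_bot.1 hb]
  exact B.star_one a

theorem leftSeries_eq_bot_of_le {m p : ℕ} (hm : B.leftSeries m = ⊥) (hp : m ≤ p) :
    B.leftSeries p = ⊥ := by
  induction p, hp using Nat.le_induction with
  | base => exact hm
  | succ p _ ih => rw [leftSeries, ih, starClosure_bot]

theorem leftSeries_le_lSeries (i : ℕ) : B.leftSeries i ≤ B.lSeries i := by
  induction i with
  | zero => exact le_rfl
  | succ i ih =>
    exact le_sup_of_le_left (closure_mono fun x ⟨a, b, hb, hx⟩ => ⟨a, b, ih hb, hx⟩)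

theorem lowerCentralSeries_le_lSeries (i : ℕ) :
    (⊤ : Subgroup A).lowerCentralSeries i ≤ B.lSeries i := by
  induction i with
  | zero => exact le_rfl
  | succ i ih =>
    rw [Subgroup.lowerCentralSeries_succ, commutator_comm]
    exact le_sup_of_le_right (commutator_mono le_rfl ih)

inductive IsWeightedCommutator : ℕ → A → Prop
  | of_mem_leftSeries {p : ℕ} {x : A} : x ∈ B.leftSeries p → IsWeightedCommutator (p + 1) x
  | commutator {r j : ℕ} {u x : A} :
      u ∈ B.leftSeries r → IsWeightedCommutator j x → IsWeightedCommutator (r + 1 + j) ⁅u, x⁆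

def weightFiltration (k : ℕ) : Subgroup A :=
  closure {x | ∃ j, k ≤ j ∧ B.IsWeightedCommutator j x}

theorem weightFiltration_antitone : Antitone B.weightFiltration :=
  fun _ _ hkl => closure_mono fun _ ⟨j, hj, hx⟩ => ⟨j, hkl.trans hj, hx⟩

variable {B} in
theorem IsWeightedCommutator.mem_weightFiltration {j : ℕ} {x : A}
    (hx : B.IsWeightedCommutator j x) : x ∈ B.weightFiltration j :=
  subset_closure ⟨j, le_rfl, hx⟩

instance weightFiltration_normal (k : ℕ) : (B.weightFiltration k).Normal where
  conj_mem x hx g := by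
    refine (closure_le (K := (B.weightFiltration k).comap (MulAut.conj g).toMonoidHom)).2 ?_ hx
    rintro y ⟨j, hj, hy⟩
    have hgy := (hy.commutator (B.mem_leftSeries_zero g)).mem_weightFiltration
    rw [SetLike.mem_coe, mem_comap, MulEquiv.coe_toMonoidHom, conj_eq_commutatorElement_mul]
    exact mul_mem (B.weightFiltration_antitone (by omega) hgy)
      (B.weightFiltration_antitone hj hy.mem_weightFiltration)

theorem commutator_mem_weightFiltration {r j : ℕ} {u x : A} (hu : u ∈ B.leftSeries r)
    (hx : x ∈ B.weightFiltration j) : ⁅u, x⁆ ∈ B.weightFiltration (r + 1 + j) := by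
  rw [← mul_inv_cancel_right ⁅u, x⁆ x, ← conj_eq_commutatorElement_mul]
  refine (MulAut.conj u).toMonoidHom.mul_inv_mem_of_mem_closure ?_ hx
  rintro y ⟨j', hj', hy⟩
  rw [MulEquiv.coe_toMonoidHom, conj_eq_commutatorElement_mul, mul_inv_cancel_right]
  exact B.weightFiltration_antitone (by omega) (hy.commutator hu).mem_weightFiltration

variable {B} in
theorem IsWeightedCommutator.star_mem_weightFiltration (a : A) {j : ℕ} {x : A}
    (hx : B.IsWeightedCommutator j x) : B.star a x ∈ B.weightFiltration (j + 1) := by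
  induction hx with
  | of_mem_leftSeries hx =>
    exact (of_mem_leftSeries (B.star_mem_starClosure a hx)).mem_weightFiltration
  | @commutator r j u x hu hx ih =>
    have hu' : B.star a u ∈ B.leftSeries (r + 1) := B.star_mem_starClosure a hu
    have hx₀ := hx.mem_weightFiltration
    have hc := (hx.commutator hu).mem_weightFiltration
    have hlam : ∀ y, B.lam a y = B.star a y * y := fun y => (inv_mul_cancel_right _ y).symm
    have hstar : B.star a ⁅u, x⁆ = ⁅B.star a u * u, B.star a x * x⁆ * ⁅u, x⁆⁻¹ := by
      rw [← hlam, ← hlam]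
      exact congrArg (· * ⁅u, x⁆⁻¹) (map_commutatorElement (B.lamHom a) u x)
    have hle : ∀ {s t : ℕ} {y z : A}, y ∈ B.leftSeries s → z ∈ B.weightFiltration t →
        r + 1 + j + 1 ≤ s + 1 + t → ⁅y, z⁆ ∈ B.weightFiltration (r + 1 + j + 1) :=
      fun hy hz hst => B.weightFiltration_antitone hst (B.commutator_mem_weightFiltration hy hz)
    rw [hstar]
    exact commutatorElement_mul_mul_mul_inv_mem (hle hu' hx₀ (by omega)) (hle hu' ih (by omega))
      (hle (B.mem_leftSeries_zero _) hc (by omega)) (hle hu ih (by omega))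
      (hle (B.mem_leftSeries_zero _) hc (by omega))

theorem star_mem_weightFiltration (a : A) {k : ℕ} {x : A} (hx : x ∈ B.weightFiltration k) :
    B.star a x ∈ B.weightFiltration (k + 1) := by
  refine (B.lamHom a).mul_inv_mem_of_mem_closure ?_ hx
  rintro y ⟨j, hj, hy⟩
  exact B.weightFiltration_antitone (by omega) 
    (hy.star_mem_weightFiltration a)

theorem lSeries_le_weightFiltration (k : ℕ) : B.lSeries k ≤ B.weightFiltration (k + 1) := by
  induction k with
  | zero =>
    exact fun x _ =>
      (IsWeightedCommutator.of_mem_leftSeries (B.mem_leftSeries_zero x)).mem_weightFiltration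
  | succ k ih =>
    refine sup_le ((closure_le _).2 ?_) (commutator_le.2 fun a _ b hb => ?_)
    · rintro _ ⟨a, b, hb, rfl⟩
      exact B.star_mem_weightFiltration a (ih hb)
    · exact B.weightFiltration_antitone (by omega)
        (B.commutator_mem_weightFiltration (B.mem_leftSeries_zero a) (ih hb))

variable {B} in
theorem IsWeightedCommutator.exists_mem_lowerCentralSeries {m : ℕ} (hm : B.leftSeries m = ⊥)
    {j : ℕ} {x : A} (hx : B.IsWeightedCommutator j x) :
    ∃ ℓ, x ∈ (⊤ : Subgroup A).lowerCentralSeries ℓ ∧ (x = 1 ∨ j ≤ (ℓ + 1) * m) := by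
  induction hx with
  | @of_mem_leftSeries p x hx =>
    refine ⟨0, mem_top x, ?_⟩
    by_cases hp : m ≤ p
    · exact Or.inl (by rwa [B.leftSeries_eq_bot_of_le hm hp, mem_bot] at hx)
    · exact Or.inr (by omega)
  | @commutator r j u x hu hx ih =>
    obtain ⟨ℓ, hxℓ, hx1 | hj⟩ := ih
    · exact ⟨0, mem_top _, Or.inl (by rw [hx1, commutatorElement_one_right])⟩
    refine ⟨ℓ + 1, ?_, ?_⟩
    · rw [Subgroup.lowerCentralSeries_succ, commutator_comm]
      exact commutator_mem_commutator (mem_top u) hxℓ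
    by_cases hr : m ≤ r
    · rw [B.leftSeries_eq_bot_of_le hm hr, mem_bot] at hu
      exact Or.inl (by rw [hu, commutatorElement_one_left])
    · right; rw [add_mul]; omega

theorem weightFiltration_eq_bot {m n : ℕ} (hm : B.leftSeries m = ⊥)
    (hn : (⊤ : Subgroup A).lowerCentralSeries n = ⊥) : B.weightFiltration (n * m + 1) = ⊥ := by
  rw [weightFiltration, closure_eq_bot_iff]
  rintro x ⟨j, hj, hx⟩
  obtain ⟨ℓ, hxℓ, hx1 | hjℓ⟩ := hx.exists_mem_lowerCentralSeries hm
  · exact hx1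
  · have hnℓ : n ≤ ℓ :=
      Nat.le_of_lt_succ (Nat.lt_of_mul_lt_mul_right (by omega : n * m < (ℓ + 1) * m))
    exact mem_bot.1 (hn ▸ Subgroup.lowerCentralSeries_antitone _ hnℓ hxℓ)

theorem exists_lSeries_eq_bot_iff :
    (∃ k, B.lSeries k = ⊥) ↔ (∃ k, B.leftSeries k = ⊥) ∧ Group.IsNilpotent A := by
  rw [Subgroup.nilpotent_iff_lowerCentralSeries]
  constructor
  · rintro ⟨k, hk⟩
    exact ⟨⟨k, le_bot_iff.1 (hk ▸ B.leftSeries_le_lSeries k)⟩,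
      ⟨k, le_bot_iff.1 (hk ▸ B.lowerCentralSeries_le_lSeries k)⟩⟩
  · rintro ⟨⟨m, hm⟩, n, hn⟩
    exact ⟨n * m,
      le_bot_iff.1 (B.weightFiltration_eq_bot hm hn ▸ B.lSeries_le_weightFiltration _)⟩

end SkewBrace

/-- A skew brace `A` is L-nilpotent (the series
`L^{i+1}(A) = ⟨a*b, [a,b] : b ∈ L^i(A)⟩` reaches `1`) iff it is left
nilpotent (the series `A^{i+1} = ⟨a*b : b ∈ A^i⟩` reaches `1`) and the group
`(A,·)` is nilpotent (its lower central series reaches `1`). -/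
theorem stmt16 {A : Type*} [Group A] (B : SkewBrace A)
    (Ls : ℕ → Subgroup A) (hL0 : Ls 0 = ⊤)
    (hLs : ∀ i, Ls (i + 1) = Subgroup.closure
      {x : A | ∃ a b : A, b ∈ Ls i ∧
        (x = a⁻¹ * B.circ a b * b⁻¹ ∨ x = a * b * a⁻¹ * b⁻¹)})
    (as : ℕ → Subgroup A) (ha0 : as 0 = ⊤)
    (has : ∀ i, as (i + 1) = Subgroup.closure
      {x : A | ∃ a b : A, b ∈ as i ∧ x = a⁻¹ * B.circ a b * b⁻¹})
    (g : ℕ → Subgroup A) (hg0 : g 0 = ⊤)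
    (hgs : ∀ i, g (i + 1) = Subgroup.closure
      {x : A | ∃ a b : A, b ∈ g i ∧ x = a * b * a⁻¹ * b⁻¹}) :
    (∃ k, Ls k = ⊥) ↔ (∃ k, as k = ⊥) ∧ (∃ k, g k = ⊥) := by
  have hL : Ls = B.lSeries := seq_eq_of_succ (fun H => B.starClosure H ⊔ ⁅⊤, H⁆) hL0
    (fun i => (hLs i).trans (B.closure_star_or_commutator_eq _)) fun _ => rfl
  have ha : as = B.leftSeries := seq_eq_of_succ B.starClosure ha0 has fun _ => rfl
  have hg : g = (⊤ : Subgroup A).lowerCentralSeries := seq_eq_of_succ (fun H => ⁅⊤, H⁆) hg0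
    (fun i => (hgs i).trans (closure_setOf_commutatorElement_eq _)) fun _ => commutator_comm _ _
  subst hL ha hg
  rw [B.exists_lSeries_eq_bot_iff, Subgroup.nilpotent_iff_lowerCentralSeries]
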